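/- For n ≥ 3, B(P_3 □ P_n) = 4, where P_3 □ P_n is the 3 × n grid graph. -/

import Mathlib

open SimpleGraph

/-- A token may stay in place or move along an edge. -/
def stepRel {V : Type*} (G : SimpleGraph V) (x y : V) : Prop := x = y ∨ G.Adj x y

/-- The sequence of positions in the pursuit game: `(gamePlay ...) n` is the pair
(pursuer positions, evader position) after `n` full rounds; at time `0` the pursuers
have been placed (`binit`) and then the evader placed (`pinit binit`). In each round,
the pursuers move first (via `bmove`, seeing the current state), then the evader moves
(via `pmove`, seeing the pursuers' new positions and his own position). -/
def gamePlay {V : Type*} {k : ℕ} (binit : Fin k → V) (bmove : (Fin k → V) → V → Fin k → V)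
    (pinit : (Fin k → V) → V) (pmove : (Fin k → V) → V → V) : ℕ → (Fin k → V) × V
  | 0 => (binit, pinit binit)
  | n + 1 =>
      let s := gamePlay binit bmove pinit pmove n
      (bmove s.1 s.2, pmove (bmove s.1 s.2) s.2)

/-- `k` bodyguards have a winning strategy on `G`: they can place themselves and move so
that, against every president strategy, after finitely many rounds they occupy the whole
open neighbourhood of the president's vertex at the end of every bodyguard turn. -/
def BodyguardsWin {V : Type*} (G : SimpleGraph V) (k : ℕ) : Prop :=
  ∃ (binit : Fin k → V) (bmove : (Fin k → V) → V → Fin k → V),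
    (∀ bs p i, stepRel G (bs i) (bmove bs p i)) ∧
    ∀ (pinit : (Fin k → V) → V) (pmove : (Fin k → V) → V → V),
      (∀ bs p, stepRel G p (pmove bs p)) →
      ∃ N, ∀ n, N ≤ n →
        ∀ v, G.Adj (gamePlay binit bmove pinit pmove n).2 v →
          ∃ i, (gamePlay binit bmove pinit pmove (n + 1)).1 i = v

/-- The bodyguard number of a finite graph. -/
noncomputable def bodyguardNumber {V : Type*} (G : SimpleGraph V) [Fintype V] : ℕ :=
  sInf {k | BodyguardsWin G k}

/-- `k` cops have a winning strategy in classic Cops and Robber on `G`: at some point a cop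
occupies the same vertex as the robber (either right after a cop move, or at the end of a
round). -/
def CopsWin {V : Type*} (G : SimpleGraph V) (k : ℕ) : Prop :=
  ∃ (cinit : Fin k → V) (cmove : (Fin k → V) → V → Fin k → V),
    (∀ cs r i, stepRel G (cs i) (cmove cs r i)) ∧
    ∀ (rinit : (Fin k → V) → V) (rmove : (Fin k → V) → V → V),
      (∀ cs r, stepRel G r (rmove cs r)) →
      ∃ n i, (gamePlay cinit cmove rinit rmove (n + 1)).1 i =
                (gamePlay cinit cmove rinit rmove n).2 ∨
             (gamePlay cinit cmove rinit rmove n).1 i =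
                (gamePlay cinit cmove rinit rmove n).2

/-- The cop number of a finite graph. -/
noncomputable def copNumber {V : Type*} (G : SimpleGraph V) [Fintype V] : ℕ :=
  sInf {k | CopsWin G k}

/-!
A president who never leaves the centre cell `(1, 1)` has four neighbours, so at least four
bodyguards are needed.

Conversely, give four bodyguards the roles "the two other cells of the president's column" and
"the cells left and right of him". Each role moves by at most one step when the president does,
so once the guards can step onto all four roles at once they can keep doing so forever, and the
roles cover the president's neighbourhood. To get there, the guards sweep the grid from the left
in a formation that advances one column per round (switching to a corner-hugging shape when the
president slips into the top or bottom row next to it) until the president is close enough to be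
surrounded; a rank that drops every round bounds the sweep.
-/

theorem BodyguardsWin.degree_le {V : Type*} {G : SimpleGraph V} {k : ℕ} (h : BodyguardsWin G k)
    (v : V) [Fintype (G.neighborSet v)] : G.degree v ≤ k := by
  obtain ⟨binit, bmove, -, hwin⟩ := h
  obtain ⟨N, hN⟩ := hwin (fun _ => v) (fun _ p => p) (fun _ _ => Or.inl rfl)
  have hstay : ∀ t, (gamePlay binit bmove (fun _ => v) (fun _ p => p) t).2 = v := by
    intro t
    induction t with
    | zero => rfl
    | succ t ih => exact ih
  have hguarded := hN N le_rfl
  rw [hstay] at hguarded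
  choose guard hguard using hguarded
  have hinj : Function.Injective fun w : G.neighborSet v => guard w w.2 := fun w w' hww' =>
    Subtype.ext ((hguard w w.2).symm.trans ((congrArg _ hww').trans (hguard w' w'.2)))
  rw [← card_neighborSet_eq_degree]
  simpa using Fintype.card_le_of_injective _ hinj

theorem degree_pathGraph_eq_two {n : ℕ} (i : Fin n) (h0 : 0 < i.1) (hi : i.1 + 1 < n)
    [Fintype ((pathGraph n).neighborSet i)] : (pathGraph n).degree i = 2 := by
  have hnbr : (pathGraph n).neighborFinset i = {⟨i.1 - 1, by omega⟩, ⟨i.1 + 1, hi⟩} := by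
    ext j
    simp only [mem_neighborFinset, pathGraph_adj, Finset.mem_insert, Finset.mem_singleton,
      Fin.ext_iff]
    omega
  rw [← card_neighborFinset_eq_degree, hnbr, Finset.card_pair]
  simp [Fin.ext_iff]

section Roles

variable {V : Type*} {G : SimpleGraph V} {k : ℕ}

structure GuardRoles (G : SimpleGraph V) (k : ℕ) where
  role : V → Fin k → V
  stepRel_role : ∀ {p q}, stepRel G p q → ∀ i, stepRel G (role p i) (role q i)
  exists_role_eq : ∀ {p v}, G.Adj p v → ∃ i, role p i = v

namespace GuardRoles

variable (R : GuardRoles G k)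

def CanTake (bs : Fin k → V) (p : V) : Prop :=
  ∃ f : Fin k → Fin k, Function.Surjective f ∧ ∀ i, stepRel G (bs i) (R.role p (f i))

open scoped Classical in
noncomputable def move (fallback : (Fin k → V) → V → Fin k → V) (bs : Fin k → V) (p : V) :
    Fin k → V :=
  if h : R.CanTake bs p then R.role p ∘ h.choose else fallback bs p

variable {R} {fallback : (Fin k → V) → V → Fin k → V}

theorem move_of_not_canTake {bs : Fin k → V} {p : V} (h : ¬R.CanTake bs p) :
    R.move fallback bs p = fallback bs p :=
  dif_neg h

theorem exists_move_eq_of_canTake {bs : Fin k → V} {p : V} (h : R.CanTake bs p) :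
    ∃ f : Fin k → Fin k, Function.Surjective f ∧ R.move fallback bs p = R.role p ∘ f :=
  ⟨h.choose, h.choose_spec.1, dif_pos h⟩

theorem stepRel_move (hfallback : ∀ bs p i, stepRel G (bs i) (fallback bs p i))
    (bs : Fin k → V) (p : V) (i : Fin k) : stepRel G (bs i) (R.move fallback bs p i) := by
  by_cases h : R.CanTake bs p
  · rw [move, dif_pos h]
    exact h.choose_spec.2 i
  · rw [move_of_not_canTake h]
    exact hfallback bs p i

theorem canTake_move {bs : Fin k → V} {p q : V} (h : R.CanTake bs p) (hpq : stepRel G p q) :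
    R.CanTake (R.move fallback bs p) q := by
  obtain ⟨f, hf, hmove⟩ := exists_move_eq_of_canTake (fallback := fallback) h
  exact ⟨f, hf, fun i => hmove ▸ R.stepRel_role hpq (f i)⟩

theorem exists_move_eq_of_adj {bs : Fin k → V} {p v : V} (h : R.CanTake bs p)
    (hv : G.Adj p v) :
    ∃ i, R.move fallback bs p i = v := by
  obtain ⟨f, hf, hmove⟩ := exists_move_eq_of_canTake (fallback := fallback) h
  obtain ⟨j, hj⟩ := R.exists_role_eq hv
  obtain ⟨i, rfl⟩ := hf j
  exact ⟨i, hmove ▸ hj⟩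

theorem bodyguardsWin_of_exists_canTake (binit : Fin k → V)
    (hfallback : ∀ bs p i, stepRel G (bs i) (fallback bs p i))
    (hreach : ∀ (pinit : (Fin k → V) → V) (pmove : (Fin k → V) → V → V),
      (∀ bs p, stepRel G p (pmove bs p)) →
      ∃ t, R.CanTake (gamePlay binit (R.move fallback) pinit pmove t).1
        (gamePlay binit (R.move fallback) pinit pmove t).2) :
    BodyguardsWin G k := by
  refine ⟨binit, R.move fallback, stepRel_move hfallback, fun pinit pmove hpmove => ?_⟩
  obtain ⟨N, hN⟩ := hreach pinit pmove hpmove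
  have hcan : ∀ t, N ≤ t → R.CanTake (gamePlay binit (R.move fallback) pinit pmove t).1
      (gamePlay binit (R.move fallback) pinit pmove t).2 := by
    intro t ht
    induction t, ht using Nat.le_induction with
    | base => exact hN
    | succ t _ ih => exact canTake_move ih (hpmove _ _)
  exact ⟨N, fun t ht v hv => exists_move_eq_of_adj (hcan t ht) hv⟩

end GuardRoles

end Roles

namespace ThreeRowGrid

variable {n : ℕ}

abbrev graph (n : ℕ) : SimpleGraph (Fin 3 × Fin n) := pathGraph 3 □ pathGraph n

theorem adj_iff {x y : Fin 3 × Fin n} :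
    (graph n).Adj x y ↔
      ((x.1.1 + 1 = y.1.1 ∨ y.1.1 + 1 = x.1.1) ∧ x.2.1 = y.2.1) ∨
      (x.1.1 = y.1.1 ∧ (x.2.1 + 1 = y.2.1 ∨ y.2.1 + 1 = x.2.1)) := by
  simp only [boxProd_adj, pathGraph_adj, Fin.ext_iff]
  tauto

theorem stepRel_iff {x y : Fin 3 × Fin n} :
    stepRel (graph n) x y ↔
      (x.1.1 = y.1.1 ∧ x.2.1 = y.2.1) ∨
      ((x.1.1 + 1 = y.1.1 ∨ y.1.1 + 1 = x.1.1) ∧ x.2.1 = y.2.1) ∨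
      (x.1.1 = y.1.1 ∧ (x.2.1 + 1 = y.2.1 ∨ y.2.1 + 1 = x.2.1)) := by
  rw [stepRel, adj_iff, Prod.ext_iff, Fin.ext_iff, Fin.ext_iff]

/-- The two other cells of `p`'s column, then the cells left and right of `p` (`p` itself at
the ends of its row). -/
def role (p : Fin 3 × Fin n) : Fin 4 → Fin 3 × Fin n :=
  ![(⟨1 - min p.1 1, by omega⟩, p.2), (⟨min (3 - p.1) 2, by omega⟩, p.2),
    (p.1, ⟨p.2 - 1, by omega⟩), (p.1, ⟨min (p.2 + 1) (n - 1), by omega⟩)]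

def roles : GuardRoles (graph n) 4 where
  role := role
  stepRel_role {p q} hpq i := by
    rw [stepRel_iff] at hpq
    fin_cases i <;> (rw [stepRel_iff]; simp [role]; omega)
  exists_role_eq {p v} hpv := by
    rw [adj_iff] at hpv
    have : role p 0 = v ∨ role p 1 = v ∨ role p 2 = v ∨ role p 3 = v := by
      simp [role, Prod.ext_iff, Fin.ext_iff]
      omega
    rcases this with h | h | h | h
    exacts [⟨0, h⟩, ⟨1, h⟩, ⟨2, h⟩, ⟨3, h⟩]

/-- Formations whose leftmost column is `j`: `wall j` holds column `j` and the middle cell of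
column `j + 1`; `top j` and `bottom j` corner a president in the top or bottom row. -/
inductive Formation (n : ℕ) where
  | wall (j : ℕ) (hj : j + 1 < n)
  | top (j : ℕ) (hj : j + 1 < n)
  | bottom (j : ℕ) (hj : j + 1 < n)

namespace Formation

def guards : Formation n → Fin 4 → Fin 3 × Fin n
  | wall j hj =>
    ![(0, ⟨j, by omega⟩), (1, ⟨j, by omega⟩), (2, ⟨j, by omega⟩), (1, ⟨j + 1, hj⟩)]
  | top j hj =>
    ![(0, ⟨j, by omega⟩), (1, ⟨j + 1, hj⟩), (2, ⟨j + 1, hj⟩), (0, ⟨j + 1, hj⟩)]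
  | bottom j hj =>
    ![(0, ⟨j + 1, hj⟩), (1, ⟨j + 1, hj⟩), (2, ⟨j, by omega⟩), (2, ⟨j + 1, hj⟩)]

def next (p : Fin 3 × Fin n) : Formation n → Formation n
  | wall j hj =>
    if p.1.1 = 0 ∧ p.2.1 = j + 1 then top j hj
    else if p.1.1 = 2 ∧ p.2.1 = j + 1 then bottom j hj
    else if h : j + 2 < n then wall (j + 1) h else wall j hj
  | top j hj => if h : j + 2 < n then top (j + 1) h else top j hj
  | bottom j hj => if h : j + 2 < n then bottom (j + 1) h else bottom j hj

def rank : Formation n → ℕ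
  | wall j _ => 2 * (n - j) + 1
  | top j _ | bottom j _ => 2 * (n - j)

def Chases (p : Fin 3 × Fin n) : Formation n → Prop
  | wall j _ => j ≤ p.2.1
  | top j _ => (p.1.1 = 0 ∧ j ≤ p.2.1 ∧ p.2.1 ≤ j + 2) ∨ (p.1.1 = 1 ∧ p.2.1 = j + 1)
  | bottom j _ => (p.1.1 = 2 ∧ j ≤ p.2.1 ∧ p.2.1 ≤ j + 2) ∨ (p.1.1 = 1 ∧ p.2.1 = j + 1)

theorem guards_injective :
    Function.Injective (guards : Formation n → Fin 4 → Fin 3 × Fin n) := by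
  intro F F' h
  have h0 := congrFun h 0
  have h2 := congrFun h 2
  have h3 := congrFun h 3
  cases F <;> cases F' <;> simp_all [guards, Prod.ext_iff, Fin.ext_iff]

theorem stepRel_next (p : Fin 3 × Fin n) (F : Formation n) (i : Fin 4) :
    stepRel (graph n) (F.guards i) ((F.next p).guards i) := by
  cases F <;> simp only [next] <;> split_ifs <;> fin_cases i <;>
    (rw [stepRel_iff]; simp [guards])

variable {F : Formation n} {p q : Fin 3 × Fin n} {j : ℕ} {hj : j + 1 < n}

theorem canTake_wall (hp : p.2.1 = j ∨ (p.1.1 = 1 ∧ p.2.1 = j + 1)) :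
    roles.CanTake (wall j hj).guards p := by
  obtain ⟨-, hr | hr | hr⟩ | hp : (p.2.1 = j ∧ (p.1.1 = 0 ∨ p.1.1 = 1 ∨ p.1.1 = 2)) ∨
      (p.1.1 = 1 ∧ p.2.1 = j + 1) := (by omega)
    <;> [refine ⟨![2, 0, 1, 3], by decide, fun i => ?_⟩;
      refine ⟨![0, 2, 1, 3], by decide, fun i => ?_⟩;
      refine ⟨![0, 1, 2, 3], by decide, fun i => ?_⟩;
      refine ⟨![0, 2, 1, 3], by decide, fun i => ?_⟩]
  all_goals fin_cases i <;> (rw [stepRel_iff]; simp [guards, roles, role]; omega)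

theorem canTake_top
    (hp : (p.1.1 = 0 ∧ (p.2.1 = j ∨ p.2.1 = j + 1 ∨ p.2.1 = j + 2 ∧ j + 3 = n)) ∨
      (p.1.1 = 1 ∧ p.2.1 = j + 1)) :
    roles.CanTake (top j hj).guards p := by
  rcases hp with hp | hp
    <;> [refine ⟨![2, 0, 1, 3], by decide, fun i => ?_⟩;
      refine ⟨![2, 3, 1, 0], by decide, fun i => ?_⟩]
  all_goals fin_cases i <;> (rw [stepRel_iff]; simp [guards, roles, role]; omega)

theorem canTake_bottom
    (hp : (p.1.1 = 2 ∧ (p.2.1 = j ∨ p.2.1 = j + 1 ∨ p.2.1 = j + 2 ∧ j + 3 = n)) ∨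
      (p.1.1 = 1 ∧ p.2.1 = j + 1)) :
    roles.CanTake (bottom j hj).guards p := by
  rcases hp with hp | hp
    <;> [refine ⟨![0, 1, 2, 3], by decide, fun i => ?_⟩;
      refine ⟨![0, 3, 2, 1], by decide, fun i => ?_⟩]
  all_goals fin_cases i <;> (rw [stepRel_iff]; simp [guards, roles, role]; omega)

theorem chases_next (hF : F.Chases p) (hp : ¬roles.CanTake F.guards p)
    (hpq : stepRel (graph n) p q) : (F.next p).Chases q ∧ (F.next p).rank < F.rank := by
  rw [stepRel_iff] at hpq
  cases F
    <;> [have hfar := mt canTake_wall hp; have hfar := mt canTake_top hp;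
      have hfar := mt canTake_bottom hp]
    <;> simp only [Chases] at hF <;> simp only [next] <;> split_ifs
    <;> simp only [Chases, rank] <;> omega

end Formation

open scoped Classical in
noncomputable def sweep (bs : Fin 4 → Fin 3 × Fin n) (p : Fin 3 × Fin n) :
    Fin 4 → Fin 3 × Fin n :=
  if h : ∃ F : Formation n, F.guards = bs then (h.choose.next p).guards else bs

theorem sweep_guards (F : Formation n) (p : Fin 3 × Fin n) :
    sweep F.guards p = (F.next p).guards := by
  have h : ∃ F', Formation.guards F' = F.guards := ⟨F, rfl⟩
  rw [sweep, dif_pos h, Formation.guards_injective h.choose_spec]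

theorem stepRel_sweep (bs : Fin 4 → Fin 3 × Fin n) (p : Fin 3 × Fin n) (i : Fin 4) :
    stepRel (graph n) (bs i) (sweep bs p i) := by
  by_cases h : ∃ F : Formation n, F.guards = bs
  · obtain ⟨F, rfl⟩ := h
    rw [sweep_guards]
    exact F.stepRel_next p i
  · rw [sweep, dif_neg h]
    exact Or.inl rfl

theorem exists_canTake_of_chases {binit : Fin 4 → Fin 3 × Fin n}
    {pinit : (Fin 4 → Fin 3 × Fin n) → Fin 3 × Fin n}
    {pmove : (Fin 4 → Fin 3 × Fin n) → Fin 3 × Fin n → Fin 3 × Fin n}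
    (hpmove : ∀ bs p, stepRel (graph n) p (pmove bs p)) (F : Formation n) (t : ℕ)
    (hF : (gamePlay binit (roles.move sweep) pinit pmove t).1 = F.guards)
    (hchases : F.Chases (gamePlay binit (roles.move sweep) pinit pmove t).2) :
    ∃ t', roles.CanTake (gamePlay binit (roles.move sweep) pinit pmove t').1
      (gamePlay binit (roles.move sweep) pinit pmove t').2 := by
  by_cases h : roles.CanTake (gamePlay binit (roles.move sweep) pinit pmove t).1
      (gamePlay binit (roles.move sweep) pinit pmove t).2
  · exact ⟨t, h⟩
  rw [hF] at h
  obtain ⟨hchases', hlt⟩ := Formation.chases_next hchases h (hpmove _ _)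
  refine exists_canTake_of_chases hpmove _ (t + 1) ?_ hchases'
  change roles.move sweep _ _ = _
  rw [hF, GuardRoles.move_of_not_canTake h, sweep_guards]
termination_by F.rank

theorem bodyguardsWin_four (hn : 1 < n) : BodyguardsWin (graph n) 4 :=
  roles.bodyguardsWin_of_exists_canTake (Formation.wall 0 hn).guards stepRel_sweep fun _ _ hpmove =>
    exists_canTake_of_chases hpmove (.wall 0 hn) 0 rfl (Nat.zero_le _)

end ThreeRowGrid

/-- For `n ≥ 3`, `B(P_3 □ P_n) = 4`. -/
theorem bodyguardNumber_pathGraph_three_boxProd (n : ℕ) (hn : 3 ≤ n) :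
    bodyguardNumber (SimpleGraph.pathGraph 3 □ SimpleGraph.pathGraph n) = 4 := by
  classical
  have hwin : BodyguardsWin (pathGraph 3 □ pathGraph n) 4 :=
    ThreeRowGrid.bodyguardsWin_four (by omega)
  have hdeg : (pathGraph 3 □ pathGraph n).degree (1, ⟨1, by omega⟩) = 4 := by
    rw [degree_boxProd, degree_pathGraph_eq_two, degree_pathGraph_eq_two] <;> simp
    omega
  exact le_antisymm (Nat.sInf_le hwin) (le_csInf ⟨4, hwin⟩ fun k hk => hdeg ▸ hk.degree_le _)
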